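/- Sp₄(ℤ) is the disjoint union of the double cosets Γ_∞·(Γ×Γ) and Γ_∞·h′_d·(Γ×Γ) for d = 1, 2, 3, …; that is, every element of Sp₄(ℤ) lies in exactly one of these sets. -/

import Mathlib

open Matrix

/-!
STATEMENT 4: Sp₄(ℤ) is the disjoint union of Γ_∞·(Γ×Γ) and Γ_∞·h′_d·(Γ×Γ) for
d = 1,2,3,….  Here Γ = SL₂(ℤ), Γ₂ = Sp₄(ℤ), Γ_∞ is the subgroup of Γ₂ with lower
left 2×2 block zero, Γ×Γ is embedded block-diagonally (interleaved), and h′_d has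
rows (1,0,0,0), (0,1,0,0), (0,d,1,0), (d,0,0,1).  We index the cosets by d ∈ ℕ,
with `h′ 0 = 1` giving the coset Γ_∞·(Γ×Γ).
-/

/-- The standard symplectic form `J = [[0, I₂],[−I₂, 0]]` of size 4 over ℤ. -/
def Jmat : Matrix (Fin 4) (Fin 4) ℤ :=
  !![0, 0, 1, 0; 0, 0, 0, 1; -1, 0, 0, 0; 0, -1, 0, 0]

/-- Membership in `Sp₄(ℤ)`: integral 4×4 matrices with `gᵀ J g = J`. -/
def IsSp4 (g : Matrix (Fin 4) (Fin 4) ℤ) : Prop := gᵀ * Jmat * g = Jmat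

/-- Membership in `Γ_∞`: symplectic with vanishing lower-left 2×2 block `C`. -/
def IsGammaInf (g : Matrix (Fin 4) (Fin 4) ℤ) : Prop :=
  IsSp4 g ∧ g 2 0 = 0 ∧ g 2 1 = 0 ∧ g 3 0 = 0 ∧ g 3 1 = 0

/-- The embedding of `Γ × Γ` into `Γ₂`. -/
def emb (γ₁ γ₂ : Matrix.SpecialLinearGroup (Fin 2) ℤ) : Matrix (Fin 4) (Fin 4) ℤ :=
  !![(γ₁ : Matrix (Fin 2) (Fin 2) ℤ) 0 0, 0, (γ₁ : Matrix (Fin 2) (Fin 2) ℤ) 0 1, 0;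
     0, (γ₂ : Matrix (Fin 2) (Fin 2) ℤ) 0 0, 0, (γ₂ : Matrix (Fin 2) (Fin 2) ℤ) 0 1;
     (γ₁ : Matrix (Fin 2) (Fin 2) ℤ) 1 0, 0, (γ₁ : Matrix (Fin 2) (Fin 2) ℤ) 1 1, 0;
     0, (γ₂ : Matrix (Fin 2) (Fin 2) ℤ) 1 0, 0, (γ₂ : Matrix (Fin 2) (Fin 2) ℤ) 1 1]

/-- The matrix `h′_d`; for `d = 0` this is the identity, corresponding to the coset
`Γ_∞·(Γ×Γ)`. -/
def h' (d : ℕ) : Matrix (Fin 4) (Fin 4) ℤ :=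
  !![1, 0, 0, 0; 0, 1, 0, 0; 0, (d : ℤ), 1, 0; (d : ℤ), 0, 0, 1]

/-!
The bottom half of `g ∈ Sp₄(ℤ)`, split into the columns on which the two factors of `Γ × Γ`
act, is a pair `(X, Y)` of integral 2×2 matrices with `det X + det Y = 0` (the rows span an
isotropic plane) and `X P + Y Q = 1` for some `P, Q` (they extend to the invertible `g`).
Multiplying `g` on the left by `u ∈ Γ_∞` multiplies `X` and `Y` on the left by the lower right
block of `u`, and multiplying on the right by `(γ₁, γ₂)` sends them to `(X γ₁, Y γ₂)`. A Smith
normal form reduction writes every such pair as `(M X₀ γ₁, M Y₀ γ₂)`, where `(X₀, Y₀)` is the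
pair of `h′_d`; coprimality forces `det M = ±1`, so `d = |det X|` is an invariant of the double
coset.
-/

open scoped MatrixGroups

namespace Matrix

section

variable {n R : Type*} [Fintype n] [DecidableEq n] [CommRing R]

local notation:1024 "↑ₘ" A:1024 => ((A : SpecialLinearGroup n R) : Matrix n n R)

theorem SpecialLinearGroup.coe_mul_coe_inv (A : SpecialLinearGroup n R) : ↑ₘA * ↑ₘA⁻¹ = 1 := by
  rw [← coe_mul, mul_inv_cancel, coe_one]

theorem SpecialLinearGroup.coe_inv_mul_coe (A : SpecialLinearGroup n R) : ↑ₘA⁻¹ * ↑ₘA = 1 := by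
  rw [← coe_mul, inv_mul_cancel, coe_one]

def LeftCoprime (X Y : Matrix n n R) : Prop :=
  ∃ P Q : Matrix n n R, X * P + Y * Q = 1

theorem LeftCoprime.mul_mul {X Y : Matrix n n R} (h : LeftCoprime X Y)
    (M γ₁ γ₂ : SpecialLinearGroup n R) : LeftCoprime (↑ₘM * X * ↑ₘγ₁) (↑ₘM * Y * ↑ₘγ₂) := by
  obtain ⟨P, Q, h⟩ := h
  refine ⟨↑ₘγ₁⁻¹ * P * ↑ₘM⁻¹, ↑ₘγ₂⁻¹ * Q * ↑ₘM⁻¹, ?_⟩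
  calc ↑ₘM * X * ↑ₘγ₁ * (↑ₘγ₁⁻¹ * P * ↑ₘM⁻¹) + ↑ₘM * Y * ↑ₘγ₂ * (↑ₘγ₂⁻¹ * Q * ↑ₘM⁻¹)
      = ↑ₘM * (X * (↑ₘγ₁ * ↑ₘγ₁⁻¹) * P + Y * (↑ₘγ₂ * ↑ₘγ₂⁻¹) * Q) * ↑ₘM⁻¹ := by
        simp only [Matrix.mul_add, Matrix.add_mul, Matrix.mul_assoc]
    _ = 1 := by
        simp only [SpecialLinearGroup.coe_mul_coe_inv, Matrix.mul_one, h]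

end

/-- Modulo `t`, `Y` becomes invertible while its determinant vanishes. -/
theorem LeftCoprime.isUnit_of_dvd {n : Type*} [Fintype n] [DecidableEq n] {X Y : Matrix n n ℤ}
    (h : LeftCoprime X Y) {t : ℤ} (hX : ∀ i j, t ∣ X i j) (hY : t ∣ Y.det) : IsUnit t := by
  obtain ⟨P, Q, h⟩ := h
  let f : ℤ →+* ZMod t.natAbs := Int.castRingHom _
  have hf : ∀ z, f z = 0 ↔ t ∣ z := fun z => by
    simp [f, ZMod.intCast_zmod_eq_zero_iff_dvd]
  have hX0 : f.mapMatrix X = 0 := by ext i j; exact (hf _).2 (hX i j)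
  have h1 := congrArg (fun A => (f.mapMatrix A).det) h
  simp only [map_add, map_mul, map_one, hX0, zero_mul, zero_add, det_mul, det_one,
    ← RingHom.map_det, (hf _).2 hY] at h1
  exact isUnit_of_dvd_one ((hf 1).1 (by simpa using h1.symm))

end Matrix

namespace Garrett

local notation:1024 "↑ₘ" A:1024 => ((A : SL(2, ℤ)) : Matrix (Fin 2) (Fin 2) ℤ)

open Matrix

theorem exists_natAbs_mul_lt (X : Matrix (Fin 2) (Fin 2) ℤ) (h0 : X 0 0 ≠ 0)
    (h : ¬ X 0 0 ∣ X 0 1) :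
    ∃ γ : SL(2, ℤ), (X * ↑ₘγ) 0 0 ≠ 0 ∧ ((X * ↑ₘγ) 0 0).natAbs < (X 0 0).natAbs := by
  refine ⟨⟨!![-(X 0 1 / X 0 0), -1; 1, 0], by simp [det_fin_two]⟩, ?_⟩
  have hmod : (X * !![-(X 0 1 / X 0 0), -1; 1, 0]) 0 0 = X 0 1 % X 0 0 := by
    simp [mul_apply, Int.emod_def]; ring
  simp only [hmod]
  have hlt := Int.emod_lt_abs (X 0 1) h0
  have hnn := Int.emod_nonneg (X 0 1) h0
  refine ⟨fun h' => h (Int.dvd_of_emod_eq_zero h'), ?_⟩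
  rw [Int.abs_eq_natAbs] at hlt
  omega

theorem exists_mul_mul_eq_diag_of_ne_zero (X : Matrix (Fin 2) (Fin 2) ℤ) (h0 : X 0 0 ≠ 0) :
    ∃ (M γ : SL(2, ℤ)) (a b : ℤ), ↑ₘM * X * ↑ₘγ = !![a, 0; 0, b] := by
  by_cases hr : X 0 0 ∣ X 0 1
  · by_cases hc : X 0 0 ∣ X 1 0
    · obtain ⟨p, hp⟩ := hr
      obtain ⟨q, hq⟩ := hc
      refine ⟨⟨!![1, 0; -q, 1], by simp [det_fin_two]⟩, ⟨!![1, -p; 0, 1], by simp [det_fin_two]⟩,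
        X 0 0, X 1 1 - q * X 0 1, ?_⟩
      ext i j
      fin_cases i <;> fin_cases j <;>
        simp [mul_apply, Fin.sum_univ_two, vecMul, dotProduct, hp, hq] <;> ring
    · obtain ⟨γ, hγ0, hγ⟩ := exists_natAbs_mul_lt Xᵀ h0 hc
      have hγX : (↑ₘγ.transpose * X) 0 0 = (Xᵀ * ↑ₘγ) 0 0 := by
        rw [← transpose_apply (↑ₘγ.transpose * X), transpose_mul,
          Matrix.SpecialLinearGroup.coe_transpose, transpose_transpose]
      obtain ⟨M, δ, a, b, h⟩ :=
        exists_mul_mul_eq_diag_of_ne_zero (↑ₘγ.transpose * X) (hγX ▸ hγ0)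
      refine ⟨M * γ.transpose, δ, a, b, ?_⟩
      rw [Matrix.SpecialLinearGroup.coe_mul, ← h]
      simp only [Matrix.mul_assoc]
  · obtain ⟨γ, hγ0, hγ⟩ := exists_natAbs_mul_lt X h0 hr
    obtain ⟨M, δ, a, b, h⟩ := exists_mul_mul_eq_diag_of_ne_zero (X * ↑ₘγ) hγ0
    refine ⟨M, γ * δ, a, b, ?_⟩
    rw [Matrix.SpecialLinearGroup.coe_mul, ← h]
    simp only [Matrix.mul_assoc]
termination_by (X 0 0).natAbs
decreasing_by
  · rw [hγX]; exact hγ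
  · exact hγ

theorem exists_mul_mul_eq_diag (X : Matrix (Fin 2) (Fin 2) ℤ) :
    ∃ (M γ : SL(2, ℤ)) (a b : ℤ), ↑ₘM * X * ↑ₘγ = !![a, 0; 0, b] := by
  by_cases h00 : X 0 0 = 0
  swap
  · exact exists_mul_mul_eq_diag_of_ne_zero X h00
  by_cases h01 : X 0 1 = 0
  · by_cases h10 : X 1 0 = 0
    · exact ⟨1, 1, 0, X 1 1, by ext i j; fin_cases i <;> fin_cases j <;> simp [h00, h01, h10]⟩
    let U : SL(2, ℤ) := ⟨!![1, 1; 0, 1], by simp [det_fin_two]⟩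
    obtain ⟨M, γ, a, b, h⟩ := exists_mul_mul_eq_diag_of_ne_zero (↑ₘU * X)
      (by simpa [U, mul_apply, vecMul, dotProduct, h00] using h10)
    refine ⟨M * U, γ, a, b, ?_⟩
    rw [Matrix.SpecialLinearGroup.coe_mul, ← h]
    simp only [Matrix.mul_assoc]
  · let L : SL(2, ℤ) := ⟨!![1, 0; 1, 1], by simp [det_fin_two]⟩
    obtain ⟨M, γ, a, b, h⟩ := exists_mul_mul_eq_diag_of_ne_zero (X * ↑ₘL)
      (by simpa [L, mul_apply, h00] using h01)
    refine ⟨M, L * γ, a, b, ?_⟩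
    rw [Matrix.SpecialLinearGroup.coe_mul, ← h]
    simp only [Matrix.mul_assoc]

def X₀ (d : ℤ) : Matrix (Fin 2) (Fin 2) ℤ := !![0, 1; d, 0]

def Y₀ (d : ℤ) : Matrix (Fin 2) (Fin 2) ℤ := !![d, 0; 0, 1]

def HasNormalForm (X Y : Matrix (Fin 2) (Fin 2) ℤ) : Prop :=
  ∃ (d : ℕ) (M : Matrix (Fin 2) (Fin 2) ℤ) (γ₁ γ₂ : SL(2, ℤ)),
    X = M * X₀ d * ↑ₘγ₁ ∧ Y = M * Y₀ d * ↑ₘγ₂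

theorem HasNormalForm.of_mul_mul {X Y : Matrix (Fin 2) (Fin 2) ℤ} (M γ₁ γ₂ : SL(2, ℤ))
    (h : HasNormalForm (↑ₘM * X * ↑ₘγ₁) (↑ₘM * Y * ↑ₘγ₂)) : HasNormalForm X Y := by
  have cancel : ∀ (Z : Matrix (Fin 2) (Fin 2) ℤ) (γ : SL(2, ℤ)),
      Z = ↑ₘM⁻¹ * (↑ₘM * Z * ↑ₘγ) * ↑ₘγ⁻¹ := fun Z γ => by
    simp only [← Matrix.mul_assoc, Matrix.SpecialLinearGroup.coe_inv_mul_coe, Matrix.one_mul]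
    simp only [Matrix.mul_assoc, Matrix.SpecialLinearGroup.coe_mul_coe_inv, Matrix.mul_one]
  obtain ⟨d, N, δ₁, δ₂, h₁, h₂⟩ := h
  refine ⟨d, ↑ₘM⁻¹ * N, δ₁ * γ₁⁻¹, δ₂ * γ₂⁻¹, ?_, ?_⟩
  · rw [cancel X γ₁, h₁, Matrix.SpecialLinearGroup.coe_mul]; simp only [Matrix.mul_assoc]
  · rw [cancel Y γ₂, h₂, Matrix.SpecialLinearGroup.coe_mul]; simp only [Matrix.mul_assoc]

theorem hasNormalForm_diag_one (δ q : ℤ) : HasNormalForm !![1, 0; 0, δ] !![-δ, q; 0, 1] := by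
  have key : ∀ (d : ℕ) (ε : ℤ), ε * ε = 1 → δ = -(ε * d) →
      HasNormalForm !![1, 0; 0, δ] !![-δ, q; 0, 1] := fun d ε hε hδ => by
    refine ⟨d, !![ε, q; 0, 1], ⟨!![0, -ε; ε, q * d], by simp [det_fin_two, hε]⟩, 1, ?_, ?_⟩ <;>
      ext i j <;> fin_cases i <;> fin_cases j <;> simp [X₀, Y₀, hδ, hε] <;> ring
  rcases Int.natAbs_eq δ with h | h
  · exact key _ (-1) (by norm_num) (by rw [← h]; ring)
  · exact key _ 1 (by norm_num) (by rw [h]; ring)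

theorem hasNormalForm_diag_one_of_leftCoprime {δ : ℤ} {Y : Matrix (Fin 2) (Fin 2) ℤ}
    (h : LeftCoprime !![1, 0; 0, δ] Y) (hY : Y.det = -δ) : HasNormalForm !![1, 0; 0, δ] Y := by
  obtain ⟨P, Q, hPQ⟩ := h
  obtain ⟨α, β, hαβ⟩ : IsCoprime (Y 1 0) (Y 1 1) := by
    have h11 := congr_fun₂ hPQ 1 1
    simp [mul_apply, Fin.sum_univ_two, vecMul, dotProduct] at h11
    rw [det_fin_two] at hY
    exact ⟨Q 0 1 + Y 0 1 * P 1 1, Q 1 1 - Y 0 0 * P 1 1, by linear_combination h11 - P 1 1 * hY⟩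
  let γ : SL(2, ℤ) := ⟨!![Y 1 1, α; -Y 1 0, β], by simp [det_fin_two]; linear_combination hαβ⟩
  have hYγ : ↑ₘ1 * Y * ↑ₘγ = !![-δ, Y 0 0 * α + Y 0 1 * β; 0, 1] := by
    rw [det_fin_two] at hY
    ext i j
    fin_cases i <;> fin_cases j <;> simp [γ, mul_apply, Fin.sum_univ_two] <;>
      first | linear_combination hY | linear_combination hαβ | ring
  apply HasNormalForm.of_mul_mul 1 1 γ
  rw [hYγ, Matrix.SpecialLinearGroup.coe_one, Matrix.one_mul, Matrix.mul_one]
  exact hasNormalForm_diag_one δ _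

theorem hasNormalForm_diag_of_leftCoprime {a b : ℤ} {Y : Matrix (Fin 2) (Fin 2) ℤ}
    (h : LeftCoprime !![a, 0; 0, b] Y) (hY : Y.det = -(a * b)) :
    HasNormalForm !![a, 0; 0, b] Y := by
  obtain ⟨u, v, huv⟩ : IsCoprime a b := by
    rw [Int.isCoprime_iff_gcd_eq_one, ← Int.natAbs_natCast (a.gcd b)]
    refine Int.isUnit_iff_natAbs_eq.mp (h.isUnit_of_dvd (fun i j => ?_) ?_)
    · fin_cases i <;> fin_cases j <;> simp [Int.gcd_dvd_left, Int.gcd_dvd_right]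
    · rw [hY, dvd_neg]
      exact (Int.gcd_dvd_left a b).mul_right b
  let M : SL(2, ℤ) := ⟨!![u, v; -b, a], by simp [det_fin_two]; linear_combination huv⟩
  let γ : SL(2, ℤ) := ⟨!![1, -(v * b); 1, u * a], by simp [det_fin_two]; linear_combination huv⟩
  have hMγ : ↑ₘM * !![a, 0; 0, b] * ↑ₘγ = !![1, 0; 0, a * b] := by
    ext i j
    fin_cases i <;> fin_cases j <;> simp [M, γ, mul_apply, Fin.sum_univ_two] <;>
      first | linear_combination huv | linear_combination a * b * huv | ring
  apply HasNormalForm.of_mul_mul M γ 1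
  rw [hMγ]
  refine hasNormalForm_diag_one_of_leftCoprime (hMγ ▸ h.mul_mul M γ 1) ?_
  simp [det_mul, hY]

theorem hasNormalForm_of_leftCoprime {X Y : Matrix (Fin 2) (Fin 2) ℤ} (h : LeftCoprime X Y)
    (hdet : X.det + Y.det = 0) : HasNormalForm X Y := by
  obtain ⟨M, γ, a, b, hMγ⟩ := exists_mul_mul_eq_diag X
  apply HasNormalForm.of_mul_mul M γ 1
  rw [hMγ]
  refine hasNormalForm_diag_of_leftCoprime (hMγ ▸ h.mul_mul M γ 1) ?_
  have hX := congrArg det hMγ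
  simp only [det_mul, Matrix.SpecialLinearGroup.det_coe, one_mul, mul_one, det_fin_two_of,
    mul_zero, sub_zero] at hX ⊢
  linear_combination hdet - hX

theorem natAbs_det_eq_of_leftCoprime {d : ℕ} {M : Matrix (Fin 2) (Fin 2) ℤ} {γ₁ γ₂ : SL(2, ℤ)}
    (h : LeftCoprime (M * X₀ d * ↑ₘγ₁) (M * Y₀ d * ↑ₘγ₂)) :
    (M * X₀ d * ↑ₘγ₁).det.natAbs = d := by
  obtain ⟨P, Q, h⟩ := h
  have hM : IsUnit M.det := isUnit_det_of_right_inverse (B := X₀ d * γ₁ * P + Y₀ d * γ₂ * Q)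
    (by rw [← h]; simp only [Matrix.mul_add, Matrix.mul_assoc])
  simp [det_mul, X₀, det_fin_two_of, Int.natAbs_mul, Int.isUnit_iff_natAbs_eq.mp hM]

end Garrett

section Sp4

open Matrix Garrett

local notation:1024 "↑ₘ" A:1024 => ((A : SL(2, ℤ)) : Matrix (Fin 2) (Fin 2) ℤ)

theorem Jmat_transpose_mul_self : Jmatᵀ * Jmat = 1 := by
  ext i j; fin_cases i <;> fin_cases j <;> simp [Jmat, mul_apply, Fin.sum_univ_four]

def symplecticInv (g : Matrix (Fin 4) (Fin 4) ℤ) : Matrix (Fin 4) (Fin 4) ℤ := Jmatᵀ * gᵀ * Jmat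

theorem IsSp4.symplecticInv_mul {g : Matrix (Fin 4) (Fin 4) ℤ} (hg : IsSp4 g) :
    symplecticInv g * g = 1 := by
  rw [symplecticInv, Matrix.mul_assoc, Matrix.mul_assoc, ← Matrix.mul_assoc gᵀ, hg,
    Jmat_transpose_mul_self]

theorem IsSp4.mul_symplecticInv {g : Matrix (Fin 4) (Fin 4) ℤ} (hg : IsSp4 g) :
    g * symplecticInv g = 1 :=
  mul_eq_one_comm.mp hg.symplecticInv_mul

theorem IsSp4.mul {g h : Matrix (Fin 4) (Fin 4) ℤ} (hg : IsSp4 g) (hh : IsSp4 h) :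
    IsSp4 (g * h) := by
  calc (g * h)ᵀ * Jmat * (g * h) = hᵀ * (gᵀ * Jmat * g) * h := by
        simp only [transpose_mul, Matrix.mul_assoc]
    _ = Jmat := by rw [hg, hh]

theorem IsSp4.of_mul_eq_one {g k : Matrix (Fin 4) (Fin 4) ℤ} (hg : IsSp4 g) (hgk : g * k = 1) :
    IsSp4 k := by
  calc kᵀ * Jmat * k = kᵀ * (gᵀ * Jmat * g) * k := by rw [hg]
    _ = (g * k)ᵀ * Jmat * (g * k) := by simp only [transpose_mul, Matrix.mul_assoc]
    _ = Jmat := by rw [hgk, transpose_one, Matrix.one_mul, Matrix.mul_one]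

theorem isSp4_h' (d : ℕ) : IsSp4 (h' d) := by
  rw [IsSp4]; ext i j
  fin_cases i <;> fin_cases j <;> simp [h', Jmat, mul_apply, Fin.sum_univ_four]

theorem isSp4_emb (γ₁ γ₂ : SL(2, ℤ)) : IsSp4 (emb γ₁ γ₂) := by
  have h₁ := γ₁.det_coe
  have h₂ := γ₂.det_coe
  rw [det_fin_two] at h₁ h₂
  rw [IsSp4]; ext i j
  fin_cases i <;> fin_cases j <;> simp [emb, Jmat, mul_apply, Fin.sum_univ_four] <;>
    first
    | linear_combination h₁
    | linear_combination -h₁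
    | linear_combination h₂
    | linear_combination -h₂
    | ring

/-- The bottom two rows of `g`, restricted to the coordinates `0, 2` on which the first factor
of `Γ × Γ` acts (`lowerFst`), resp. to the coordinates `1, 3` of the second factor (`lowerSnd`). -/
def lowerFst (g : Matrix (Fin 4) (Fin 4) ℤ) : Matrix (Fin 2) (Fin 2) ℤ :=
  !![g 2 0, g 2 2; g 3 0, g 3 2]

def lowerSnd (g : Matrix (Fin 4) (Fin 4) ℤ) : Matrix (Fin 2) (Fin 2) ℤ :=
  !![g 2 1, g 2 3; g 3 1, g 3 3]

def lowerRight (g : Matrix (Fin 4) (Fin 4) ℤ) : Matrix (Fin 2) (Fin 2) ℤ :=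
  !![g 2 2, g 2 3; g 3 2, g 3 3]

theorem lowerFst_mul_emb (g : Matrix (Fin 4) (Fin 4) ℤ) (γ₁ γ₂ : SL(2, ℤ)) :
    lowerFst (g * emb γ₁ γ₂) = lowerFst g * ↑ₘγ₁ := by
  ext i j; fin_cases i <;> fin_cases j <;>
    simp [lowerFst, emb, mul_apply, Fin.sum_univ_four, Fin.sum_univ_two]

theorem lowerSnd_mul_emb (g : Matrix (Fin 4) (Fin 4) ℤ) (γ₁ γ₂ : SL(2, ℤ)) :
    lowerSnd (g * emb γ₁ γ₂) = lowerSnd g * ↑ₘγ₂ := by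
  ext i j; fin_cases i <;> fin_cases j <;>
    simp [lowerSnd, emb, mul_apply, Fin.sum_univ_four, Fin.sum_univ_two]

theorem lowerFst_mul {u : Matrix (Fin 4) (Fin 4) ℤ}
    (hu : u 2 0 = 0 ∧ u 2 1 = 0 ∧ u 3 0 = 0 ∧ u 3 1 = 0) (g : Matrix (Fin 4) (Fin 4) ℤ) :
    lowerFst (u * g) = lowerRight u * lowerFst g := by
  obtain ⟨h20, h21, h30, h31⟩ := hu
  ext i j; fin_cases i <;> fin_cases j <;>
    simp [lowerFst, lowerRight, mul_apply, Fin.sum_univ_four, Fin.sum_univ_two, h20, h21, h30, h31]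

theorem lowerSnd_mul {u : Matrix (Fin 4) (Fin 4) ℤ}
    (hu : u 2 0 = 0 ∧ u 2 1 = 0 ∧ u 3 0 = 0 ∧ u 3 1 = 0) (g : Matrix (Fin 4) (Fin 4) ℤ) :
    lowerSnd (u * g) = lowerRight u * lowerSnd g := by
  obtain ⟨h20, h21, h30, h31⟩ := hu
  ext i j; fin_cases i <;> fin_cases j <;>
    simp [lowerSnd, lowerRight, mul_apply, Fin.sum_univ_four, Fin.sum_univ_two, h20, h21, h30, h31]

theorem lowerFst_h' (d : ℕ) : lowerFst (h' d) = X₀ d := by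
  ext i j; fin_cases i <;> fin_cases j <;> simp [lowerFst, h', X₀]

theorem lowerSnd_h' (d : ℕ) : lowerSnd (h' d) = Y₀ d := by
  ext i j; fin_cases i <;> fin_cases j <;> simp [lowerSnd, h', Y₀]

theorem IsSp4.det_lowerFst_add_det_lowerSnd {g : Matrix (Fin 4) (Fin 4) ℤ} (hg : IsSp4 g) :
    (lowerFst g).det + (lowerSnd g).det = 0 := by
  have h21 := congr_fun₂ hg.mul_symplecticInv 2 1
  simp [symplecticInv, Jmat, mul_apply, Fin.sum_univ_four] at h21
  simp only [lowerFst, lowerSnd, det_fin_two_of]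
  linear_combination h21

theorem IsSp4.leftCoprime_lowerFst_lowerSnd {g : Matrix (Fin 4) (Fin 4) ℤ} (hg : IsSp4 g) :
    LeftCoprime (lowerFst g) (lowerSnd g) := by
  -- `P` and `Q` are read off the last two columns of `g⁻¹ = Jᵀ gᵀ J`.
  refine ⟨!![-g 0 2, -g 1 2; g 0 0, g 1 0], !![-g 0 3, -g 1 3; g 0 1, g 1 1], ?_⟩
  have h22 := congr_fun₂ hg.mul_symplecticInv 2 2
  have h23 := congr_fun₂ hg.mul_symplecticInv 2 3
  have h32 := congr_fun₂ hg.mul_symplecticInv 3 2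
  have h33 := congr_fun₂ hg.mul_symplecticInv 3 3
  simp [symplecticInv, Jmat, mul_apply, Fin.sum_univ_four] at h22 h23 h32 h33
  ext i j
  fin_cases i <;> fin_cases j <;> simp [lowerFst, lowerSnd]
  exacts [by linear_combination h22, by linear_combination h23, by linear_combination h32,
    by linear_combination h33]

theorem lowerLeft_mul_symplecticInv_h' {v : Matrix (Fin 4) (Fin 4) ℤ}
    {M : Matrix (Fin 2) (Fin 2) ℤ} {d : ℕ}
    (h₁ : lowerFst v = M * X₀ d) (h₂ : lowerSnd v = M * Y₀ d) :
    (v * symplecticInv (h' d)) 2 0 = 0 ∧ (v * symplecticInv (h' d)) 2 1 = 0 ∧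
      (v * symplecticInv (h' d)) 3 0 = 0 ∧ (v * symplecticInv (h' d)) 3 1 = 0 := by
  simp only [lowerFst, lowerSnd, X₀, Y₀, ← Matrix.ext_iff, Fin.forall_fin_two] at h₁ h₂
  simp at h₁ h₂
  obtain ⟨⟨h20, h22⟩, h30, h32⟩ := h₁
  obtain ⟨⟨h21, h23⟩, h31, h33⟩ := h₂
  simp [symplecticInv, h', Jmat, mul_apply, Fin.sum_univ_four, h20, h21, h22, h23, h30, h31, h32,
    h33]

theorem IsSp4.mul_h'_mul_emb {u : Matrix (Fin 4) (Fin 4) ℤ} (hu : IsSp4 u) (d : ℕ)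
    (γ₁ γ₂ : SL(2, ℤ)) : IsSp4 (u * h' d * emb γ₁ γ₂) :=
  (hu.mul (isSp4_h' d)).mul (isSp4_emb γ₁ γ₂)

theorem IsSp4.exists_eq_mul_h'_mul_emb {g : Matrix (Fin 4) (Fin 4) ℤ} (hg : IsSp4 g) :
    ∃ (d : ℕ) (u : Matrix (Fin 4) (Fin 4) ℤ) (γ₁ γ₂ : SL(2, ℤ)),
      IsGammaInf u ∧ g = u * h' d * emb γ₁ γ₂ := by
  obtain ⟨d, M, γ₁, γ₂, hX, hY⟩ :=
    hasNormalForm_of_leftCoprime hg.leftCoprime_lowerFst_lowerSnd hg.det_lowerFst_add_det_lowerSnd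
  have hE := isSp4_emb γ₁ γ₂
  have hH := isSp4_h' d
  set v := g * symplecticInv (emb γ₁ γ₂) with hv
  have hvE : v * emb γ₁ γ₂ = g := by
    rw [hv, Matrix.mul_assoc, hE.symplecticInv_mul, Matrix.mul_one]
  have cancel : ∀ (A B : Matrix (Fin 2) (Fin 2) ℤ) (γ : SL(2, ℤ)), A * ↑ₘγ = B * ↑ₘγ → A = B :=
    fun A B γ => ((Matrix.isUnit_iff_isUnit_det _).2 (by simp)).mul_right_cancel
  have h₁ : lowerFst v = M * X₀ d := cancel _ _ γ₁ (by rw [← lowerFst_mul_emb _ γ₁ γ₂, hvE, hX])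
  have h₂ : lowerSnd v = M * Y₀ d := cancel _ _ γ₂ (by rw [← lowerSnd_mul_emb _ γ₁ γ₂, hvE, hY])
  refine ⟨d, v * symplecticInv (h' d), γ₁, γ₂, ⟨?_, lowerLeft_mul_symplecticInv_h' h₁ h₂⟩, ?_⟩
  · exact (hg.mul (hE.of_mul_eq_one hE.mul_symplecticInv)).mul
      (hH.of_mul_eq_one hH.mul_symplecticInv)
  · rw [Matrix.mul_assoc v, hH.symplecticInv_mul, Matrix.mul_one, hvE]

theorem IsGammaInf.natAbs_det_lowerFst {u : Matrix (Fin 4) (Fin 4) ℤ} (hu : IsGammaInf u) (d : ℕ)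
    (γ₁ γ₂ : SL(2, ℤ)) : (lowerFst (u * h' d * emb γ₁ γ₂)).det.natAbs = d := by
  have h := (hu.1.mul_h'_mul_emb d γ₁ γ₂).leftCoprime_lowerFst_lowerSnd
  rw [lowerFst_mul_emb, lowerSnd_mul_emb, lowerFst_mul hu.2, lowerSnd_mul hu.2, lowerFst_h',
    lowerSnd_h'] at h
  rw [lowerFst_mul_emb, lowerFst_mul hu.2, lowerFst_h']
  exact natAbs_det_eq_of_leftCoprime h

end Sp4

theorem sp4_garrett_decomposition :
    (∀ (d : ℕ) (u : Matrix (Fin 4) (Fin 4) ℤ)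
        (γ₁ γ₂ : Matrix.SpecialLinearGroup (Fin 2) ℤ),
      IsGammaInf u → IsSp4 (u * h' d * emb γ₁ γ₂))
    ∧
    (∀ g : Matrix (Fin 4) (Fin 4) ℤ, IsSp4 g →
      ∃! d : ℕ, ∃ (u : Matrix (Fin 4) (Fin 4) ℤ)
        (γ₁ γ₂ : Matrix.SpecialLinearGroup (Fin 2) ℤ),
        IsGammaInf u ∧ g = u * h' d * emb γ₁ γ₂) := by
  refine ⟨fun d u γ₁ γ₂ hu => hu.1.mul_h'_mul_emb d γ₁ γ₂, fun g hg => ?_⟩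
  obtain ⟨d, u, γ₁, γ₂, hu, rfl⟩ := hg.exists_eq_mul_h'_mul_emb
  refine ⟨d, ⟨u, γ₁, γ₂, hu, rfl⟩, ?_⟩
  rintro d' ⟨u', δ₁, δ₂, hu', h⟩
  rw [← hu'.natAbs_det_lowerFst d' δ₁ δ₂, ← h, hu.natAbs_det_lowerFst]
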